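/- Let ρ ∈ (0,1), m ∈ ℕ with m ≥ 1, and A ⊆ B ⊆ K₁ be measurable subsets of the unit parabolic cube. If |A| ≤ ρ|K₁| and whenever K is a dyadic cube of K₁ with |K ∩ A| > ρ|K| the stacked predecessor set K̄^m is contained in B, then |A| ≤ (ρ(m+1)/m)|B|. -/

import Mathlib

open MeasureTheory

noncomputable section

/-- A parabolic box: spatial closed box `[lo, hi]` times the time interval `(t0, t1]`. -/
def parBox (d : ℕ) (lo hi : Fin d → ℝ) (t0 t1 : ℝ) : Set ((Fin d → ℝ) × ℝ) :=
  {p | (∀ s, lo s ≤ p.1 s ∧ p.1 s ≤ hi s) ∧ t0 < p.2 ∧ p.2 ≤ t1}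

/-- The unit parabolic cube `K₁ = [-1,1]^d × (-1,0]`. -/
def K₁ (d : ℕ) : Set ((Fin d → ℝ) × ℝ) :=
  parBox d (fun _ => -1) (fun _ => 1) (-1) 0

/-- The dyadic sub-cube of `K₁` of generation `n` with spatial indices `i`
(each `i s < 2 ^ n`) and time index `j < 4 ^ n`: each spatial side of `K₁`
is split in `2 ^ n` pieces and the time interval in `4 ^ n` pieces. -/
def dyadicCube (d n : ℕ) (i : Fin d → ℕ) (j : ℕ) : Set ((Fin d → ℝ) × ℝ) :=
  parBox d
    (fun s => -1 + (i s : ℝ) * (2 * ((2 : ℝ) ^ n)⁻¹))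
    (fun s => -1 + ((i s : ℝ) + 1) * (2 * ((2 : ℝ) ^ n)⁻¹))
    (-1 + (j : ℝ) * ((4 : ℝ) ^ n)⁻¹)
    (-1 + ((j : ℝ) + 1) * ((4 : ℝ) ^ n)⁻¹)

/-- The set `K̄^m` obtained by stacking `m` time-copies of the predecessor
(parent) of the generation-`n` dyadic cube with indices `i`, `j`:
the parent is the generation-`(n-1)` cube with indices `s ↦ i s / 2` and `j / 4`,
and if its time interval is `(a, b]`, the stacked set keeps the parent's spatial
box and has time interval `(b, b + m * (b - a)]`. -/
def stackedPredecessor (d n m : ℕ) (i : Fin d → ℕ) (j : ℕ) :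
    Set ((Fin d → ℝ) × ℝ) :=
  parBox d
    (fun s => -1 + ((i s / 2 : ℕ) : ℝ) * (2 * ((2 : ℝ) ^ (n - 1))⁻¹))
    (fun s => -1 + (((i s / 2 : ℕ) : ℝ) + 1) * (2 * ((2 : ℝ) ^ (n - 1))⁻¹))
    (-1 + (((j / 4 : ℕ) : ℝ) + 1) * ((4 : ℝ) ^ (n - 1))⁻¹)
    (-1 + (((j / 4 : ℕ) : ℝ) + 1) * ((4 : ℝ) ^ (n - 1))⁻¹ +
      (m : ℝ) * ((4 : ℝ) ^ (n - 1))⁻¹)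

/-!
Call a dyadic cube `K` bad if `|K ∩ A| > ρ|K|`. No bad cube is of the first generation: its
stacked predecessor lies in `t > 0`, outside `K₁ ⊇ B`. A density argument (outer regularity and
maximal dyadic cubes inside an open set) shows that almost every point of `A` lies in a bad cube,
hence in the predecessor of one. The maximal such predecessors `K̄` are pairwise disjoint and not
bad, so `|A| ≤ ρ ∑ |K̄|`, and their stacks `K̄^m` lie in `B`. Finally
`∑ |K̄| ≤ (m + 1) / m · |⋃ K̄^m|`: slicing at a fixed spatial point reduces this to disjoint
intervals `(a, b]` with stacks `(b, b + m (b - a)]`, added one at a time in decreasing order of `b`.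
-/

open Set Function

section StackedIntervals

variable {ι : Type*} {m : ℝ} {a b c : ι → ℝ}

theorem volume_Ioc_sdiff_le_of_stacked (hm : 0 < m) {U V : Set ℝ} (hVU : V ⊆ U)
    {a₀ b₀ c₀ : ℝ} (hc₀ : b₀ + m * (b₀ - a₀) ≤ c₀)
    (hcases : Ioc a₀ b₀ ⊆ U ∨ Disjoint (Ioc b₀ c₀) V) :
    volume (Ioc a₀ c₀ \ U) ≤ ENNReal.ofReal ((m + 1) / m) * volume (Ioc b₀ c₀ \ V) := by
  rcases hcases with hcovered | hfree
  · have hsub : Ioc a₀ c₀ \ U ⊆ Ioc b₀ c₀ \ V := by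
      intro t ⟨ht, htU⟩
      exact ⟨⟨not_le.1 fun htb => htU (hcovered ⟨ht.1, htb⟩), ht.2⟩, fun htV => htU (hVU htV)⟩
    calc volume (Ioc a₀ c₀ \ U) ≤ 1 * volume (Ioc b₀ c₀ \ V) := by
          rw [one_mul]; exact measure_mono hsub
      _ ≤ _ := by
        gcongr
        rw [ENNReal.one_le_ofReal, le_div_iff₀ hm]
        linarith
  · rw [hfree.sdiff_eq_left]
    calc volume (Ioc a₀ c₀ \ U) ≤ ENNReal.ofReal (c₀ - a₀) := by
          rw [← Real.volume_Ioc]; exact measure_mono sdiff_subset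
      _ ≤ ENNReal.ofReal ((m + 1) / m * (c₀ - b₀)) := by
          gcongr
          rw [div_mul_eq_mul_div, le_div_iff₀ hm]
          nlinarith
      _ = _ := by
          rw [ENNReal.ofReal_mul (by positivity), Real.volume_Ioc]

theorem volume_biUnion_Ioc_le_of_stacked [DecidableEq ι] (hm : 0 < m) (hab : ∀ p, a p < b p)
    (hc : ∀ p, b p + m * (b p - a p) ≤ c p)
    (hdisj : Pairwise (Disjoint on (fun p => Ioc (a p) (b p)))) (F : Finset ι) :
    volume (⋃ p ∈ F, Ioc (a p) (c p)) ≤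
      ENNReal.ofReal ((m + 1) / m) * volume (⋃ p ∈ F, Ioc (b p) (c p)) := by
  induction F using Finset.induction_on_max_value b with
  | empty => simp
  | insert p₀ F hp₀ hmax ih =>
    set U := ⋃ p ∈ F, Ioc (a p) (c p)
    set V := ⋃ p ∈ F, Ioc (b p) (c p)
    have hbelow : ∀ p ∈ F, b p ≤ a p₀ := fun p hp => by
      by_contra! h
      have hne : p ≠ p₀ := fun h => hp₀ (h ▸ hp)
      exact (hdisj hne).le_bot ⟨⟨hab p, le_rfl⟩, h, hmax p hp⟩
    have hVU : V ⊆ U := biUnion_mono subset_rfl fun p _ => Ioc_subset_Ioc_left (hab p).le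
    -- `(a₀, b₀]` lies above every earlier interval: either an earlier stack reaches it and covers
    -- it, or the new stack `(b₀, c₀]` misses all earlier stacks.
    have hcases : Ioc (a p₀) (b p₀) ⊆ U ∨ Disjoint (Ioc (b p₀) (c p₀)) V := by
      by_cases h : ∃ p ∈ F, b p₀ ≤ c p
      · obtain ⟨p, hp, hbc⟩ := h
        exact Or.inl fun t ht => mem_biUnion hp
          ⟨(hab p).trans_le (hbelow p hp) |>.trans ht.1, ht.2.trans hbc⟩
      · push Not at h
        refine Or.inr (disjoint_left.2 fun t ht htV => ?_)
        obtain ⟨p, hp, htp⟩ := mem_iUnion₂.1 htV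
        exact lt_asymm ht.1 (htp.2.trans_lt (h p hp))
    have hV : MeasurableSet V :=
      F.measurableSet_biUnion fun _ _ => measurableSet_Ioc
    rw [Finset.set_biUnion_insert, Finset.set_biUnion_insert, union_comm, union_comm (Ioc _ _),
      ← union_sdiff_self, ← union_sdiff_self (s := V),
      measure_union disjoint_sdiff_right (measurableSet_Ioc.diff hV), mul_add]
    exact (measure_union_le _ _).trans (add_le_add ih
      (volume_Ioc_sdiff_le_of_stacked hm hVU (hc p₀) hcases))

theorem volume_iUnion_Ioc_le_of_stacked [Countable ι] (hm : 0 < m) (hab : ∀ p, a p < b p)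
    (hc : ∀ p, b p + m * (b p - a p) ≤ c p)
    (hdisj : Pairwise (Disjoint on (fun p => Ioc (a p) (b p)))) :
    volume (⋃ p, Ioc (a p) (c p)) ≤
      ENNReal.ofReal ((m + 1) / m) * volume (⋃ p, Ioc (b p) (c p)) := by
  classical
  have hmono : Monotone fun F : Finset ι => ⋃ p ∈ F, Ioc (a p) (c p) :=
    fun _ _ hFG => biUnion_subset_biUnion_left (Finset.coe_subset.2 hFG)
  rw [iUnion_eq_iUnion_finset, hmono.directed_le.measure_iUnion]
  refine iSup_le fun F => (volume_biUnion_Ioc_le_of_stacked hm hab hc hdisj F).trans ?_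
  gcongr
  exact iUnion_subset fun _ => subset_rfl

theorem measure_iUnion_prod_Ioc_le_of_stacked {α : Type*} [MeasurableSpace α] [Countable ι]
    (μ : Measure α) [SFinite μ] {S : ι → Set α} (hS : ∀ p, MeasurableSet (S p)) (hm : 0 < m)
    (hab : ∀ p, a p < b p) (hc : ∀ p, b p + m * (b p - a p) ≤ c p)
    (hdisj : Pairwise (Disjoint on (fun p => S p ×ˢ Ioc (a p) (b p)))) :
    μ.prod volume (⋃ p, S p ×ˢ Ioc (a p) (c p)) ≤
      ENNReal.ofReal ((m + 1) / m) * μ.prod volume (⋃ p, S p ×ˢ Ioc (b p) (c p)) := by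
  have hslice : ∀ (f g : ι → ℝ) (x : α),
      Prod.mk x ⁻¹' ⋃ p, S p ×ˢ Ioc (f p) (g p) = ⋃ p : {p // x ∈ S p}, Ioc (f p) (g p) := by
    intro f g x
    ext t
    simp [and_left_comm]
  have hmeas : ∀ f g : ι → ℝ, MeasurableSet (⋃ p, S p ×ˢ Ioc (f p) (g p)) :=
    fun f g => .iUnion fun p => (hS p).prod measurableSet_Ioc
  rw [Measure.prod_apply (hmeas _ _), Measure.prod_apply (hmeas _ _),
    ← lintegral_const_mul _ (measurable_measure_prodMk_left (hmeas _ _))]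
  refine lintegral_mono fun x => ?_
  simp only [hslice]
  refine volume_iUnion_Ioc_le_of_stacked hm (fun p => hab p) (fun p => hc p) fun p q hpq => ?_
  have := hdisj (Subtype.coe_injective.ne hpq)
  rw [onFun, disjoint_prod] at this
  exact this.resolve_left (not_disjoint_iff.2 ⟨x, p.2, q.2⟩)

end StackedIntervals

theorem measure_le_mul_tsum_of_sdiff_null {α ι : Type*} [MeasurableSpace α] [Countable ι]
    {μ : Measure α} {Q : ι → Set α} {E : Set α} {r : ENNReal} (hE : μ (E \ ⋃ i, Q i) = 0)
    (h : ∀ i, μ (Q i ∩ E) ≤ r * μ (Q i)) :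
    μ E ≤ r * ∑' i, μ (Q i) :=
  calc μ E ≤ μ ((⋃ i, Q i) ∩ E) := by
        simpa [hE, inter_comm] using measure_le_inter_add_sdiff μ E (⋃ i, Q i)
    _ ≤ ∑' i, μ (Q i ∩ E) := by rw [iUnion_inter]; exact measure_iUnion_le _
    _ ≤ ∑' i, r * μ (Q i) := ENNReal.tsum_le_tsum h
    _ = r * ∑' i, μ (Q i) := ENNReal.tsum_mul_left

def gridIoc (h : ℝ) (k : ℕ) : Set ℝ := Ioc (-1 + k * h) (-1 + (k + 1) * h)

section GridIoc

variable {h : ℝ} {k k' : ℕ}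

theorem volume_gridIoc : volume (gridIoc h k) = ENNReal.ofReal h := by
  rw [gridIoc, Real.volume_Ioc]
  ring_nf

theorem gridIoc_subset_gridIoc_div (hh : 0 < h) {q : ℕ} (hq : 0 < q) :
    gridIoc h k ⊆ gridIoc (q * h) (k / q) := by
  have hlo : ((k / q : ℕ) : ℝ) * q ≤ k := by exact_mod_cast Nat.div_mul_le_self k q
  have hhi : (k : ℝ) + 1 ≤ ((k / q : ℕ) + 1) * q := by
    exact_mod_cast (add_one_mul (k / q) q).symm ▸ Nat.lt_div_mul_add (a := k) hq
  apply Ioc_subset_Ioc <;> nlinarith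

theorem eq_of_not_disjoint_gridIoc (hh : 0 < h)
    (hkk' : ¬Disjoint (gridIoc h k) (gridIoc h k')) : k = k' := by
  obtain ⟨t, ⟨hk₁, hk₂⟩, hk'₁, hk'₂⟩ := not_disjoint_iff.1 hkk'
  have : (k : ℝ) < k' + 1 := lt_of_mul_lt_mul_right (by linarith) hh.le
  have : (k' : ℝ) < k + 1 := lt_of_mul_lt_mul_right (by linarith) hh.le
  norm_cast at *
  omega

theorem exists_lt_mem_gridIoc {N : ℕ} {y : ℝ} (hy : y ∈ gridIoc (N * h) 0) :
    ∃ k < N, y ∈ gridIoc h k := by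
  simp only [gridIoc, CharP.cast_eq_zero, zero_mul, add_zero, zero_add, one_mul] at hy
  induction N with
  | zero => simp at hy
  | succ N ih =>
    by_cases hyN : y ≤ -1 + N * h
    · obtain ⟨k, hk, hyk⟩ := ih ⟨hy.1, hyN⟩
      exact ⟨k, by omega, hyk⟩
    · refine ⟨N, by omega, not_le.1 hyN, ?_⟩
      simpa [add_mul] using hy.2

theorem dist_le_of_mem_gridIoc {x y : ℝ} (hx : x ∈ gridIoc h k) (hy : y ∈ gridIoc h k) :
    dist x y ≤ h := by
  rw [Real.dist_eq, abs_sub_le_iff]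
  constructor <;> linarith [hx.1, hx.2, hy.1, hy.2]

end GridIoc

def spaceStep (n : ℕ) : ℝ := 2 * ((2 : ℝ) ^ n)⁻¹

def timeStep (n : ℕ) : ℝ := ((4 : ℝ) ^ n)⁻¹

section Steps

variable {k n : ℕ}

theorem spaceStep_pos (n : ℕ) : 0 < spaceStep n := by unfold spaceStep; positivity

theorem timeStep_pos (n : ℕ) : 0 < timeStep n := by unfold timeStep; positivity

theorem spaceStep_eq_mul (hkn : k ≤ n) : spaceStep k = (2 ^ (n - k) : ℕ) * spaceStep n := by
  rw [spaceStep, spaceStep, ← Nat.sub_add_cancel hkn]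
  push_cast
  rw [Nat.add_sub_cancel, pow_add]
  field_simp

theorem timeStep_eq_mul (hkn : k ≤ n) : timeStep k = (4 ^ (n - k) : ℕ) * timeStep n := by
  rw [timeStep, timeStep, ← Nat.sub_add_cancel hkn]
  push_cast
  rw [Nat.add_sub_cancel, pow_add]
  field_simp

theorem timeStep_le_spaceStep (n : ℕ) : timeStep n ≤ spaceStep n := by
  rw [timeStep, spaceStep, show (4 : ℝ) = 2 * 2 by norm_num, mul_pow, mul_inv]
  gcongr
  exact (inv_le_one_of_one_le₀ (one_le_pow₀ one_le_two)).trans one_le_two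

theorem tendsto_spaceStep_atTop : Filter.Tendsto spaceStep Filter.atTop (nhds 0) := by
  have := (tendsto_inv_atTop_zero.comp
    (tendsto_pow_atTop_atTop_of_one_lt (one_lt_two (α := ℝ)))).const_mul 2
  rwa [mul_zero] at this

end Steps

theorem K₁_eq_prod (d : ℕ) : K₁ d = (univ.pi fun _ => Icc (-1) 1) ×ˢ Ioc (-1) 0 := by
  ext
  simp only [K₁, parBox, mem_ofPred_eq, mem_prod, mem_univ_pi, mem_Icc, mem_Ioc]

theorem volume_K₁_lt_top (d : ℕ) : volume (K₁ d) < ⊤ := by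
  rw [K₁_eq_prod]
  exact (measure_mono (prod_mono subset_rfl Ioc_subset_Icc_self)).trans_lt
    ((isCompact_univ_pi fun _ => isCompact_Icc).prod isCompact_Icc).measure_lt_top

@[ext]
structure DyadicIndex (d : ℕ) where
  gen : ℕ
  space : Fin d → ℕ
  time : ℕ

namespace DyadicIndex

variable {d : ℕ} {ρ : ℝ}

instance : Countable (DyadicIndex d) :=
  Function.Injective.countable (f := fun c : DyadicIndex d => (c.gen, c.space, c.time))
    fun c c' h => by cases c; cases c'; simp_all

def spatialBox (c : DyadicIndex d) : Set (Fin d → ℝ) :=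
  univ.pi fun s => gridIoc (spaceStep c.gen) (c.space s)

/-- Unlike `dyadicCube`, the spatial sides are half-open, so that distinct cubes of one generation
are disjoint; the two differ by a null set. -/
def cube (c : DyadicIndex d) : Set ((Fin d → ℝ) × ℝ) :=
  c.spatialBox ×ˢ gridIoc (timeStep c.gen) c.time

def stacked (m : ℕ) (c : DyadicIndex d) : Set ((Fin d → ℝ) × ℝ) :=
  c.spatialBox ×ˢ Ioc (-1 + (c.time + 1) * timeStep c.gen)
    (-1 + (c.time + 1) * timeStep c.gen + m * timeStep c.gen)

def ancestor (k : ℕ) (c : DyadicIndex d) : DyadicIndex d :=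
  ⟨k, fun s => c.space s / 2 ^ (c.gen - k), c.time / 4 ^ (c.gen - k)⟩

def parent (c : DyadicIndex d) : DyadicIndex d := c.ancestor (c.gen - 1)

def root : DyadicIndex d := ⟨0, 0, 0⟩

def IsSubcube (c : DyadicIndex d) : Prop :=
  1 ≤ c.gen ∧ (∀ s, c.space s < 2 ^ c.gen) ∧ c.time < 4 ^ c.gen

theorem measurableSet_spatialBox (c : DyadicIndex d) : MeasurableSet c.spatialBox :=
  .univ_pi fun _ => measurableSet_Ioc

theorem measurableSet_cube (c : DyadicIndex d) : MeasurableSet c.cube :=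
  c.measurableSet_spatialBox.prod measurableSet_Ioc

theorem volume_cube (c : DyadicIndex d) :
    volume c.cube = ENNReal.ofReal (spaceStep c.gen) ^ d * ENNReal.ofReal (timeStep c.gen) := by
  simp [cube, spatialBox, Measure.volume_eq_prod, volume_pi_pi, volume_gridIoc]

@[simp]
theorem ancestor_gen (k : ℕ) (c : DyadicIndex d) : (c.ancestor k).gen = k := rfl

@[simp]
theorem ancestor_self (c : DyadicIndex d) : c.ancestor c.gen = c := by
  ext <;> simp [ancestor]

theorem ancestor_ancestor {k l : ℕ} (c : DyadicIndex d) (hkl : k ≤ l) (hl : l ≤ c.gen) :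
    (c.ancestor l).ancestor k = c.ancestor k := by
  have hexp : c.gen - l + (l - k) = c.gen - k := by omega
  ext <;> simp [ancestor, Nat.div_div_eq_div_mul, ← pow_add, hexp]

theorem cube_subset_cube_ancestor {k : ℕ} (c : DyadicIndex d) (hk : k ≤ c.gen) :
    c.cube ⊆ (c.ancestor k).cube := by
  refine prod_mono (pi_mono fun s _ => ?_) ?_
  · rw [ancestor_gen, spaceStep_eq_mul hk]
    exact gridIoc_subset_gridIoc_div (spaceStep_pos _) (by positivity)
  · rw [ancestor_gen, timeStep_eq_mul hk]
    exact gridIoc_subset_gridIoc_div (timeStep_pos _) (by positivity)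

theorem eq_of_not_disjoint_cube {c c' : DyadicIndex d} (hgen : c.gen = c'.gen)
    (hcc' : ¬Disjoint c.cube c'.cube) : c = c' := by
  obtain ⟨⟨x, t⟩, ⟨hx, ht⟩, hx', ht'⟩ := not_disjoint_iff.1 hcc'
  obtain ⟨n, i, j⟩ := c
  obtain ⟨n', i', j'⟩ := c'
  obtain rfl : n = n' := hgen
  ext s
  · rfl
  · exact eq_of_not_disjoint_gridIoc (spaceStep_pos _)
      (not_disjoint_iff.2 ⟨x s, hx s (mem_univ s), hx' s (mem_univ s)⟩)
  · exact eq_of_not_disjoint_gridIoc (timeStep_pos _) (not_disjoint_iff.2 ⟨t, ht, ht'⟩)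

theorem eq_ancestor_of_not_disjoint_cube {c c' : DyadicIndex d} (hgen : c.gen ≤ c'.gen)
    (hcc' : ¬Disjoint c.cube c'.cube) : c = c'.ancestor c.gen :=
  eq_of_not_disjoint_cube rfl fun h => hcc' (h.mono_right (c'.cube_subset_cube_ancestor hgen))

theorem IsSubcube.ancestor {c : DyadicIndex d} (hc : c.IsSubcube) {k : ℕ} (hk : 1 ≤ k)
    (hkc : k ≤ c.gen) : (c.ancestor k).IsSubcube := by
  have hpow : ∀ b : ℕ, b ^ k * b ^ (c.gen - k) = b ^ c.gen := fun b => by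
    rw [← pow_add, Nat.add_sub_cancel' hkc]
  refine ⟨hk, fun s => ?_, ?_⟩
  · exact Nat.div_lt_of_lt_mul (by rw [ancestor_gen, mul_comm, hpow]; exact hc.2.1 s)
  · exact Nat.div_lt_of_lt_mul (by rw [ancestor_gen, mul_comm, hpow]; exact hc.2.2)

def maximalCubes (S : Set (DyadicIndex d)) : Set (DyadicIndex d) :=
  {p ∈ S | ∀ k < p.gen, p.ancestor k ∉ S}

theorem exists_mem_maximalCubes_cube_subset {S : Set (DyadicIndex d)} {c : DyadicIndex d}
    (hc : c ∈ S) : ∃ p ∈ maximalCubes S, c.cube ⊆ p.cube := by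
  classical
  have hex : ∃ k, k ≤ c.gen ∧ c.ancestor k ∈ S := ⟨c.gen, le_rfl, by rwa [ancestor_self]⟩
  obtain ⟨hk, hkS⟩ := Nat.find_spec hex
  refine ⟨c.ancestor (Nat.find hex), ⟨hkS, fun k hk' hkS' => ?_⟩, c.cube_subset_cube_ancestor hk⟩
  rw [ancestor_gen] at hk'
  rw [ancestor_ancestor c hk'.le hk] at hkS'
  exact Nat.find_min hex hk' ⟨hk'.le.trans hk, hkS'⟩

theorem biUnion_cube_subset_biUnion_maximalCubes (S : Set (DyadicIndex d)) :
    ⋃ c ∈ S, c.cube ⊆ ⋃ p ∈ maximalCubes S, p.cube :=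
  iUnion₂_subset fun _ hc =>
    let ⟨_, hp, hcp⟩ := exists_mem_maximalCubes_cube_subset hc
    hcp.trans (subset_biUnion_of_mem hp)

theorem pairwiseDisjoint_maximalCubes (S : Set (DyadicIndex d)) :
    (maximalCubes S).PairwiseDisjoint cube := by
  have key : ∀ p ∈ maximalCubes S, ∀ q ∈ maximalCubes S, p.gen ≤ q.gen →
      ¬Disjoint p.cube q.cube → p = q := by
    intro p hp q hq hpq hnd
    have hp_eq := eq_ancestor_of_not_disjoint_cube hpq hnd
    rcases hpq.lt_or_eq with hlt | heq
    · exact absurd (hp_eq ▸ hp.1) (hq.2 p.gen hlt)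
    · rwa [heq, ancestor_self] at hp_eq
  intro p hp q hq hne
  by_contra hnd
  rcases le_total p.gen q.gen with hpq | hqp
  · exact hne (key p hp q hq hpq hnd)
  · exact hne (key q hq p hp hqp (fun h => hnd h.symm)).symm

theorem tsum_volume_cube_le_stacked {m : ℕ} (hm : 0 < m) {M : Set (DyadicIndex d)}
    (hM : M.PairwiseDisjoint cube) :
    ∑' p : M, volume (p : DyadicIndex d).cube ≤
      ENNReal.ofReal ((m + 1) / m) * volume (⋃ p ∈ M, p.stacked m) := by
  rw [← measure_biUnion M.to_countable hM fun p _ => p.measurableSet_cube, biUnion_eq_iUnion,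
    biUnion_eq_iUnion, Measure.volume_eq_prod]
  set a := fun p : M => -1 + (p.1.time : ℝ) * timeStep p.1.gen
  set b := fun p : M => -1 + (p.1.time + 1 : ℝ) * timeStep p.1.gen
  have hab : ∀ p, a p < b p := fun p => by simp only [a, b]; linarith [timeStep_pos p.1.gen]
  have hcube : ∀ p : M, p.1.cube ⊆ p.1.spatialBox ×ˢ Ioc (a p) (b p + m * timeStep p.1.gen) :=
    fun p => prod_mono subset_rfl (Ioc_subset_Ioc_right
      (le_add_of_nonneg_right (mul_nonneg m.cast_nonneg (timeStep_pos _).le)))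
  refine (measure_mono (iUnion_mono hcube)).trans ?_
  exact measure_iUnion_prod_Ioc_le_of_stacked volume (fun p => p.1.measurableSet_spatialBox)
    (Nat.cast_pos.2 hm) hab (fun p => le_of_eq (by simp only [a, b]; ring))
    ((pairwise_subtype_iff_pairwise_set M _).2 hM)

theorem volume_le_of_stacked_cover {m : ℕ} (hm : 0 < m) {A B : Set ((Fin d → ℝ) × ℝ)}
    {M : Set (DyadicIndex d)} (hM : M.PairwiseDisjoint cube)
    (hAM : volume (A \ ⋃ p ∈ M, p.cube) = 0)
    (hgood : ∀ p ∈ M, volume (p.cube ∩ A) ≤ ENNReal.ofReal ρ * volume p.cube)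
    (hB : ∀ p ∈ M, p.stacked m ⊆ B) :
    volume A ≤ ENNReal.ofReal (ρ * (m + 1) / m) * volume B := by
  rw [biUnion_eq_iUnion] at hAM
  calc volume A ≤ ENNReal.ofReal ρ * ∑' p : M, volume (p : DyadicIndex d).cube :=
        measure_le_mul_tsum_of_sdiff_null hAM fun p => hgood p p.2
    _ ≤ ENNReal.ofReal ρ *
          (ENNReal.ofReal ((m + 1) / m) * volume (⋃ p ∈ M, p.stacked m)) := by
        gcongr; exact tsum_volume_cube_le_stacked hm hM
    _ ≤ ENNReal.ofReal ρ * (ENNReal.ofReal ((m + 1) / m) * volume B) := by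
        gcongr; exact iUnion₂_subset hB
    _ = ENNReal.ofReal (ρ * (m + 1) / m) * volume B := by
        rw [← mul_assoc, ← ENNReal.ofReal_mul' (by positivity), mul_div_assoc]

theorem cube_root :
    (root : DyadicIndex d).cube = (univ.pi fun _ => Ioc (-1) 1) ×ˢ Ioc (-1) 0 := by
  norm_num [cube, spatialBox, root, gridIoc, spaceStep, timeStep]

theorem volume_K₁_diff_cube_root : volume (K₁ d \ (root : DyadicIndex d).cube) = 0 := by
  have hsub :
      K₁ d \ (root : DyadicIndex d).cube ⊆ ⋃ s, {x : Fin d → ℝ | x s = -1} ×ˢ univ := by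
    rintro ⟨x, t⟩ ⟨hK, hroot⟩
    simp only [K₁_eq_prod, cube_root, mem_prod, mem_univ_pi, mem_Icc, mem_Ioc] at hK hroot
    simp only [mem_iUnion, mem_prod, mem_ofPred_eq, mem_univ, and_true]
    by_contra! h
    exact hroot ⟨fun s => ⟨(hK.1 s).1.lt_of_ne (h s).symm, (hK.1 s).2⟩, hK.2⟩
  refine measure_mono_null hsub (measure_iUnion_null fun s => ?_)
  rw [Measure.volume_eq_prod, Measure.prod_prod, volume_pi, Measure.pi_hyperplane, zero_mul]

theorem exists_isSubcube_mem_cube {x : (Fin d → ℝ) × ℝ}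
    (hx : x ∈ (root : DyadicIndex d).cube) {n : ℕ} (hn : 1 ≤ n) :
    ∃ c : DyadicIndex d, c.IsSubcube ∧ c.gen = n ∧ x ∈ c.cube := by
  obtain ⟨hxs, hxt⟩ := hx
  have hsp : ∀ s, ∃ k < 2 ^ n, x.1 s ∈ gridIoc (spaceStep n) k := fun s => by
    have h := hxs s (mem_univ s)
    rw [show root.gen = 0 from rfl, spaceStep_eq_mul (Nat.zero_le n), Nat.sub_zero] at h
    exact exists_lt_mem_gridIoc h
  choose i hi hxi using hsp
  obtain ⟨j, hj, hxj⟩ : ∃ j < 4 ^ n, x.2 ∈ gridIoc (timeStep n) j := by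
    rw [show root.gen = 0 from rfl, timeStep_eq_mul (Nat.zero_le n), Nat.sub_zero] at hxt
    exact exists_lt_mem_gridIoc hxt
  exact ⟨⟨n, i, j⟩, ⟨hn, hi, hj⟩, rfl, fun s _ => hxi s, hxj⟩

theorem dist_le_spaceStep_of_mem_cube {c : DyadicIndex d} {x y : (Fin d → ℝ) × ℝ}
    (hx : x ∈ c.cube) (hy : y ∈ c.cube) : dist x y ≤ spaceStep c.gen := by
  rw [Prod.dist_eq]
  refine max_le ((dist_pi_le_iff (spaceStep_pos _).le).2 fun s => ?_) ?_
  · exact dist_le_of_mem_gridIoc (hx.1 s (mem_univ s)) (hy.1 s (mem_univ s))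
  · exact (dist_le_of_mem_gridIoc hx.2 hy.2).trans (timeStep_le_spaceStep _)

theorem exists_isSubcube_mem_cube_subset {x : (Fin d → ℝ) × ℝ}
    (hx : x ∈ (root : DyadicIndex d).cube) {U : Set ((Fin d → ℝ) × ℝ)} (hU : U ∈ nhds x) :
    ∃ c : DyadicIndex d, c.IsSubcube ∧ x ∈ c.cube ∧ c.cube ⊆ U := by
  obtain ⟨ε, hε, hball⟩ := Metric.mem_nhds_iff.1 hU
  obtain ⟨n, hnε, hn⟩ := ((tendsto_spaceStep_atTop.eventually (gt_mem_nhds hε)).and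
    (Filter.eventually_ge_atTop 1)).exists
  obtain ⟨c, hc, rfl, hxc⟩ := exists_isSubcube_mem_cube hx hn
  exact ⟨c, hc, hxc, fun y hy =>
    hball (Metric.mem_ball.2 ((dist_le_spaceStep_of_mem_cube hy hxc).trans_lt hnε))⟩

theorem volume_le_of_forall_cube_inter_le {E U : Set ((Fin d → ℝ) × ℝ)} (hEK : E ⊆ K₁ d)
    (hE : ∀ c : DyadicIndex d, c.IsSubcube →
      volume (c.cube ∩ E) ≤ ENNReal.ofReal ρ * volume c.cube)
    (hU : IsOpen U) (hEU : E ⊆ U) : volume E ≤ ENNReal.ofReal ρ * volume U := by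
  set M := maximalCubes {c : DyadicIndex d | c.IsSubcube ∧ c.cube ⊆ U}
  have hcover : E \ ⋃ p ∈ M, p.cube ⊆ K₁ d \ (root : DyadicIndex d).cube := by
    rintro x ⟨hxE, hxM⟩
    refine ⟨hEK hxE, fun hroot => hxM ?_⟩
    obtain ⟨c, hc, hxc, hcU⟩ := exists_isSubcube_mem_cube_subset hroot (hU.mem_nhds (hEU hxE))
    exact biUnion_cube_subset_biUnion_maximalCubes _ (mem_biUnion ⟨hc, hcU⟩ hxc)
  have hnull := measure_mono_null hcover volume_K₁_diff_cube_root
  rw [biUnion_eq_iUnion] at hnull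
  calc volume E ≤ ENNReal.ofReal ρ * ∑' p : M, volume (p : DyadicIndex d).cube :=
        measure_le_mul_tsum_of_sdiff_null hnull fun p => hE p p.2.1.1
    _ = ENNReal.ofReal ρ * volume (⋃ p ∈ M, p.cube) := by
        rw [measure_biUnion M.to_countable (pairwiseDisjoint_maximalCubes _)
          fun p _ => p.measurableSet_cube]
    _ ≤ ENNReal.ofReal ρ * volume U := by
        gcongr
        exact iUnion₂_subset fun p hp => hp.1.2

theorem volume_eq_zero_of_forall_cube_inter_le (hρ : ρ < 1) {E : Set ((Fin d → ℝ) × ℝ)}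
    (hEK : E ⊆ K₁ d)
    (hE : ∀ c : DyadicIndex d, c.IsSubcube →
      volume (c.cube ∩ E) ≤ ENNReal.ofReal ρ * volume c.cube) :
    volume E = 0 := by
  have hfin : volume E ≠ ⊤ := ((measure_mono hEK).trans_lt (volume_K₁_lt_top d)).ne
  have hle : volume E ≤ ENNReal.ofReal ρ * volume E := by
    refine ENNReal.le_of_forall_pos_le_add fun ε hε _ => ?_
    obtain ⟨U, hEU, hU, hUlt⟩ := E.exists_isOpen_lt_add hfin (ENNReal.coe_ne_zero.2 hε.ne')
    calc volume E ≤ ENNReal.ofReal ρ * volume U :=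
          volume_le_of_forall_cube_inter_le hEK hE hU hEU
      _ ≤ ENNReal.ofReal ρ * (volume E + ε) := by gcongr
      _ ≤ ENNReal.ofReal ρ * volume E + ε := by
        rw [mul_add]
        gcongr
        exact mul_le_of_le_one_left' (ENNReal.ofReal_le_one.2 hρ.le)
  by_contra hne
  refine (ENNReal.mul_lt_mul_iff_left hne hfin).2 (ENNReal.ofReal_lt_one.2 hρ) |>.not_ge ?_
  rwa [one_mul]

def badCubes (ρ : ℝ) (A : Set ((Fin d → ℝ) × ℝ)) : Set (DyadicIndex d) :=
  {c | c.IsSubcube ∧ ENNReal.ofReal ρ * volume c.cube < volume (c.cube ∩ A)}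

theorem volume_sdiff_biUnion_badCubes (hρ : ρ < 1) {A : Set ((Fin d → ℝ) × ℝ)}
    (hA : A ⊆ K₁ d) :
    volume (A \ ⋃ c ∈ badCubes ρ A, c.cube) = 0 := by
  refine volume_eq_zero_of_forall_cube_inter_le hρ (sdiff_subset.trans hA) fun c hc => ?_
  by_cases hbad : c ∈ badCubes ρ A
  · rw [(disjoint_sdiff_right.mono_left (subset_biUnion_of_mem hbad)).inter_eq, measure_empty]
    exact zero_le
  · exact (measure_mono (inter_subset_inter_right _ sdiff_subset)).trans
      (not_lt.1 fun h => hbad ⟨hc, h⟩)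

theorem biUnion_cube_subset_biUnion_maximalCubes_parent (S : Set (DyadicIndex d)) :
    ⋃ c ∈ S, c.cube ⊆ ⋃ p ∈ maximalCubes (parent '' S), p.cube :=
  (iUnion₂_subset fun c hc => (c.cube_subset_cube_ancestor (Nat.sub_le _ _)).trans
    (subset_biUnion_of_mem (mem_image_of_mem parent hc))).trans
  (biUnion_cube_subset_biUnion_maximalCubes _)

theorem volume_cube_inter_le_of_mem_maximalCubes {A : Set ((Fin d → ℝ) × ℝ)}
    (hgen : ∀ c ∈ badCubes ρ A, 2 ≤ c.gen) {p : DyadicIndex d}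
    (hp : p ∈ maximalCubes (parent '' badCubes ρ A)) :
    volume (p.cube ∩ A) ≤ ENNReal.ofReal ρ * volume p.cube := by
  obtain ⟨⟨c, hc, rfl⟩, hmax⟩ := hp
  by_contra! hbad
  have hsub : c.parent.IsSubcube := hc.1.ancestor (by have := hgen c hc; omega) (Nat.sub_le _ _)
  have hgen' := hgen _ ⟨hsub, hbad⟩
  exact hmax _ (by simp only [parent, ancestor_gen] at hgen' ⊢; omega) ⟨_, ⟨hsub, hbad⟩, rfl⟩

theorem cube_subset_dyadicCube (n : ℕ) (i : Fin d → ℕ) (j : ℕ) :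
    (⟨n, i, j⟩ : DyadicIndex d).cube ⊆ dyadicCube d n i j :=
  fun _ ⟨hx, ht⟩ => ⟨fun s => ⟨(hx s (mem_univ s)).1.le, (hx s (mem_univ s)).2⟩, ht⟩

theorem volume_dyadicCube (n : ℕ) (i : Fin d → ℕ) (j : ℕ) :
    volume (dyadicCube d n i j) = volume (⟨n, i, j⟩ : DyadicIndex d).cube := by
  have hprod : dyadicCube d n i j = (univ.pi fun s =>
      Icc (-1 + i s * spaceStep n) (-1 + (i s + 1) * spaceStep n)) ×ˢ
        gridIoc (timeStep n) j := by
    ext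
    simp only [dyadicCube, parBox, mem_ofPred_eq, mem_prod, mem_univ_pi, mem_Icc, gridIoc,
      mem_Ioc, spaceStep, timeStep]
  rw [hprod, volume_cube, Measure.volume_eq_prod, Measure.prod_prod, volume_pi_pi,
    volume_gridIoc]
  simp only [Real.volume_Icc, add_sub_add_left_eq_sub, ← sub_mul, add_sub_cancel_left, one_mul,
    Finset.prod_const, Finset.card_univ, Fintype.card_fin]

theorem volume_dyadicCube_inter_gt_of_mem_badCubes {A : Set ((Fin d → ℝ) × ℝ)}
    {c : DyadicIndex d} (hc : c ∈ badCubes ρ A) :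
    ENNReal.ofReal ρ * volume (dyadicCube d c.gen c.space c.time) <
      volume (dyadicCube d c.gen c.space c.time ∩ A) := by
  rw [volume_dyadicCube]
  exact hc.2.trans_le (measure_mono (inter_subset_inter_left _ (cube_subset_dyadicCube ..)))

theorem stacked_parent_subset_stackedPredecessor {m : ℕ} {c : DyadicIndex d} (hc : 1 ≤ c.gen) :
    c.parent.stacked m ⊆ stackedPredecessor d c.gen m c.space c.time := by
  obtain ⟨n, i, j⟩ := c
  have hn : n - (n - 1) = 1 := by dsimp only at hc; omega
  rintro ⟨x, t⟩ ⟨hx, ht⟩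
  simp only [parent, ancestor, hn, pow_one] at hx ht
  exact ⟨fun s => ⟨(hx s (mem_univ s)).1.le, (hx s (mem_univ s)).2⟩, ht⟩

theorem stackedPredecessor_one_not_subset_K₁ {m : ℕ} (hm : 1 ≤ m) (i : Fin d → ℕ) (j : ℕ) :
    ¬stackedPredecessor d 1 m i j ⊆ K₁ d := by
  intro h
  have hm' : (1 : ℝ) ≤ m := by exact_mod_cast hm
  have hmem : (fun s => -1 + ((i s / 2 : ℕ) : ℝ) * 2, ((j / 4 : ℕ) : ℝ) + m) ∈
      stackedPredecessor d 1 m i j := by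
    refine ⟨fun s => ⟨?_, ?_⟩, ?_, ?_⟩ <;> norm_num
    linarith
  have := (h hmem).2.2
  linarith [(j / 4).cast_nonneg (α := ℝ)]

end DyadicIndex

open DyadicIndex

theorem stacked_covering_lemma_general (d m : ℕ) (hm : 1 ≤ m) (ρ : ℝ)
    (hρ1 : ρ < 1)
    (A B : Set ((Fin d → ℝ) × ℝ))
    (hAB : A ⊆ B) (hBK : B ⊆ K₁ d)
    (hcov : ∀ n : ℕ, 1 ≤ n → ∀ i : Fin d → ℕ, ∀ j : ℕ,
      (∀ s, i s < 2 ^ n) → j < 4 ^ n →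
      ENNReal.ofReal ρ * volume (dyadicCube d n i j) <
        volume (dyadicCube d n i j ∩ A) →
      stackedPredecessor d n m i j ⊆ B) :
    volume A ≤ ENNReal.ofReal (ρ * (m + 1) / m) * volume B := by
  have hstacked : ∀ c ∈ badCubes ρ A, stackedPredecessor d c.gen m c.space c.time ⊆ B :=
    fun c hc => hcov c.gen hc.1.1 c.space c.time hc.1.2.1 hc.1.2.2
      (volume_dyadicCube_inter_gt_of_mem_badCubes hc)
  have hgen : ∀ c ∈ badCubes ρ A, 2 ≤ c.gen := fun c hc => by
    by_contra! hlt
    obtain hc1 : c.gen = 1 := by have := hc.1.1; omega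
    exact stackedPredecessor_one_not_subset_K₁ hm _ _ (hc1 ▸ (hstacked c hc).trans hBK)
  have hB : ∀ p ∈ maximalCubes (parent '' badCubes ρ A), p.stacked m ⊆ B := by
    rintro p ⟨⟨c, hc, rfl⟩, -⟩
    exact (stacked_parent_subset_stackedPredecessor hc.1.1).trans (hstacked c hc)
  have hcover : volume (A \ ⋃ p ∈ maximalCubes (parent '' badCubes ρ A), p.cube) = 0 :=
    measure_mono_null (sdiff_subset_sdiff_right (biUnion_cube_subset_biUnion_maximalCubes_parent _))
      (volume_sdiff_biUnion_badCubes hρ1 (hAB.trans hBK))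
  exact volume_le_of_stacked_cover hm (pairwiseDisjoint_maximalCubes _) hcover
    (fun _ hp => volume_cube_inter_le_of_mem_maximalCubes hgen hp) hB

theorem stacked_covering_lemma (d m : ℕ) (hm : 1 ≤ m) (ρ : ℝ)
    (hρ0 : 0 < ρ) (hρ1 : ρ < 1)
    (A B : Set ((Fin d → ℝ) × ℝ))
    (hAmeas : MeasurableSet A) (hBmeas : MeasurableSet B)
    (hAB : A ⊆ B) (hBK : B ⊆ K₁ d)
    (hA : volume A ≤ ENNReal.ofReal ρ * volume (K₁ d))
    (hcov : ∀ n : ℕ, 1 ≤ n → ∀ i : Fin d → ℕ, ∀ j : ℕ,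
      (∀ s, i s < 2 ^ n) → j < 4 ^ n →
      ENNReal.ofReal ρ * volume (dyadicCube d n i j) <
        volume (dyadicCube d n i j ∩ A) →
      stackedPredecessor d n m i j ⊆ B) :
    volume A ≤ ENNReal.ofReal (ρ * (m + 1) / m) * volume B :=
  stacked_covering_lemma_general d m hm ρ hρ1 A B hAB hBK hcov

end
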